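/- Define W^{(q)} : ℝ → ℝ by W^{(q)}(s) = Σ_{i=1}^3 C_i e^{β_i s} for s ≥ 0 and W^{(q)}(s) = 0 for s < 0, and Z^{(q)} : ℝ → ℝ by Z^{(q)}(s) = q·Σ_{i=1}^3 (C_i/β_i)e^{β_i s} for s ≥ 0 and Z^{(q)}(s) = 1 for s < 0. Suppose y* > log K satisfies ∫_{−∞}^0 ∫_{−∞}^{t} (w_δ(t+y*) − δ)·e^{−(t−u)}·λθe^{θu} du dt = δq. Then for every x > y*: δ·Z^{(q)}(x−y*) − ∫_{−∞}^0 ∫_{−∞}^{t} (w_δ(t+y*) − δ)·W^{(q)}(x−y*−t+u)·λθe^{θu} du dt = (δ/(β₂−β₁))·( β₂e^{β₁(x−y*)} − β₁e^{β₂(x−y*)} ). (This is the explicit formula for the value function V of the McKean stochastic game on (y*, ∞) in the jump-diffusion case.) -/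

import Mathlib

/-
Both double integrals factor: against the jump density `λθe^{θu}`, each inner integral over
`u < t` is a constant multiple of `e^{θt}` (for the `W` kernel the constant is `λθ` times the convolution
`∫₀ˢ W(v) e^{-θ(s-v)} dv`, `s = x - y*`). The integral equation therefore pins down
`λθ ∫_{t<0} (w_δ(t+y*) - δ) e^{θt} dt = δq(θ+1)`, and the claim becomes an identity between
exponentials in `s`. There the coefficient of `e^{β₃s}` vanishes because `β₃ = 1`, that of
`e^{-θs}` vanishes by the partial-fraction identity `∑ᵢ 1/∏_{j≠i}(β_j - β_i) = 0`, and those of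
`e^{β₁s}`, `e^{β₂s}` follow from `σ²β₁β₂/2 = θq`, the cubic evaluated at `z = 0`. Evaluating the
cubic (extended by continuity) at `z = -θ` gives `σ²(θ+β₁)(θ+β₂)(θ+1)/2 = -λθ ≠ 0`, so no `βᵢ`
equals `-θ`.
-/

open MeasureTheory Real Set

theorem integral_Iio_exp_mul {c : ℝ} (hc : 0 < c) (b : ℝ) :
    ∫ u in Iio b, exp (c * u) = exp (c * b) / c := by
  rw [← integral_Iic_eq_integral_Iio, integral_exp_mul_Iic hc]

theorem integral_Iio_comp_add_right (f : ℝ → ℝ) (t c : ℝ) :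
    ∫ u in Iio t, f (u + c) = ∫ v in Iio (t + c), f v := by
  have h := (measurePreserving_add_right volume c).setIntegral_preimage_emb
    (measurableEmbedding_addRight c) f (Iio (t + c))
  rw [← h]
  congr 2
  ext u; simp

theorem setIntegral_Iio_eq_intervalIntegral_zero {f : ℝ → ℝ} (hf : ∀ v < 0, f v = 0) {s : ℝ}
    (hs : 0 ≤ s) : ∫ v in Iio s, f v = ∫ v in 0..s, f v := by
  rw [intervalIntegral.integral_of_le hs, integral_Ioc_eq_integral_Ioo,
    ← integral_Ico_eq_integral_Ioo]
  exact setIntegral_eq_of_subset_of_forall_sdiff_eq_zero measurableSet_Iio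
    (fun v hv => hv.2) (fun v hv => hf v (not_le.mp fun h => hv.2 ⟨h, hv.1⟩))

theorem hasDerivAt_exp_mul_div {c : ℝ} (hc : c ≠ 0) (v : ℝ) :
    HasDerivAt (fun v => exp (c * v) / c) (exp (c * v)) v :=
  ((((hasDerivAt_id v).const_mul c).exp).div_const c).congr_deriv (by simp [hc])

theorem integral_exp_mul {c : ℝ} (hc : c ≠ 0) (a b : ℝ) :
    ∫ v in a..b, exp (c * v) = (exp (c * b) - exp (c * a)) / c := by
  rw [intervalIntegral.integral_eq_sub_of_hasDerivAt (fun v _ => hasDerivAt_exp_mul_div hc v)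
    ((by fun_prop : Continuous fun v => exp (c * v)).intervalIntegrable a b), sub_div]

theorem integral_exp_mul_mul_exp_sub {β θ : ℝ} (h : θ + β ≠ 0) (s : ℝ) :
    ∫ v in 0..s, exp (β * v) * exp (-(θ * (s - v)))
      = (exp (β * s) - exp (-(θ * s))) / (θ + β) := by
  have hsplit : ∀ v, exp (β * v) * exp (-(θ * (s - v))) = exp (-(θ * s)) * exp ((θ + β) * v) := by
    intro v; rw [← exp_add, ← exp_add]; ring_nf
  simp_rw [hsplit, intervalIntegral.integral_const_mul, integral_exp_mul h, mul_zero, exp_zero,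
    mul_div_assoc', mul_sub, mul_one, ← exp_add]
  ring_nf

theorem integral_Iio_integral_Iio_factor {a g ρ : ℝ → ℝ} {k : ℝ → ℝ → ℝ} {c : ℝ}
    (hk : ∀ t, ∫ u in Iio t, k t u * ρ u = c * g t) (T : ℝ) :
    ∫ t in Iio T, ∫ u in Iio t, a t * k t u * ρ u = c * ∫ t in Iio T, a t * g t := by
  simp_rw [mul_assoc (a _), integral_const_mul, hk, ← integral_const_mul, mul_left_comm c]

theorem integral_Iio_exp_sub_mul_exp {θ : ℝ} (hθ : 0 < θ) (r t : ℝ) :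
    ∫ u in Iio t, exp (-(t - u)) * (r * exp (θ * u)) = r / (θ + 1) * exp (θ * t) := by
  have hsplit : ∀ u, exp (-(t - u)) * (r * exp (θ * u)) = r * exp (-t) * exp ((θ + 1) * u) := by
    intro u; rw [mul_left_comm, mul_assoc, ← exp_add, ← exp_add]; ring_nf
  simp_rw [hsplit, integral_const_mul, integral_Iio_exp_mul (by linarith : 0 < θ + 1)]
  rw [mul_div_assoc', mul_assoc, ← exp_add]
  ring_nf

theorem integral_Iio_shift_mul_exp {W : ℝ → ℝ} (hW : ∀ v < 0, W v = 0) {s : ℝ} (hs : 0 ≤ s)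
    (r θ t : ℝ) :
    ∫ u in Iio t, W (s - t + u) * (r * exp (θ * u))
      = r * (∫ v in 0..s, W v * exp (-(θ * (s - v)))) * exp (θ * t) := by
  have hsplit : ∀ u, W (s - t + u) * (r * exp (θ * u))
      = (r * exp (θ * t)) * (W (u + (s - t)) * exp (-(θ * (s - (u + (s - t)))))) := by
    intro u
    have hexp : exp (θ * u) = exp (θ * t) * exp (-(θ * (s - (s - t + u)))) := by
      rw [← exp_add]; ring_nf
    rw [add_comm u, hexp]
    ring
  simp_rw [hsplit, integral_const_mul]
  rw [integral_Iio_comp_add_right (fun v => W v * exp (-(θ * (s - v)))), add_sub_cancel,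
    setIntegral_Iio_eq_intervalIntegral_zero (fun v hv => by rw [hW v hv, zero_mul]) hs]
  ring

theorem integral_exp_sum_mul_exp_sub {C₁ C₂ C₃ β₁ β₂ β₃ θ : ℝ} (h₁ : θ + β₁ ≠ 0)
    (h₂ : θ + β₂ ≠ 0) (h₃ : θ + β₃ ≠ 0) (s : ℝ) :
    ∫ v in 0..s, (C₁ * exp (β₁ * v) + C₂ * exp (β₂ * v) + C₃ * exp (β₃ * v))
        * exp (-(θ * (s - v)))
      = C₁ * ((exp (β₁ * s) - exp (-(θ * s))) / (θ + β₁))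
        + C₂ * ((exp (β₂ * s) - exp (-(θ * s))) / (θ + β₂))
        + C₃ * ((exp (β₃ * s) - exp (-(θ * s))) / (θ + β₃)) := by
  have hint : ∀ β : ℝ, IntervalIntegrable (fun v => exp (β * v) * exp (-(θ * (s - v)))) volume 0 s :=
    fun β => (by fun_prop : Continuous _).intervalIntegrable 0 s
  simp_rw [add_mul, mul_assoc]
  rw [intervalIntegral.integral_add (((hint β₁).const_mul C₁).add ((hint β₂).const_mul C₂))
      ((hint β₃).const_mul C₃), intervalIntegral.integral_add ((hint β₁).const_mul C₁)
      ((hint β₂).const_mul C₂)]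
  simp_rw [intervalIntegral.integral_const_mul, integral_exp_mul_mul_exp_sub h₁,
    integral_exp_mul_mul_exp_sub h₂, integral_exp_mul_mul_exp_sub h₃]

theorem cubic_eq_of_forall_ne {σ lam θ μ q β₁ β₂ : ℝ} {ψ : ℝ → ℝ}
    (hψ : ∀ z : ℝ, z ≠ -θ → ψ z = σ^2/2 * z^2 + μ * z + lam * (θ/(θ+z) - 1))
    (hcubic : ∀ z : ℝ, z ≠ -θ →
      σ^2/2 * (z - β₁) * (z - β₂) * (z - 1) = (θ + z) * (ψ z - q)) (z : ℝ) :
    σ^2/2 * (z - β₁) * (z - β₂) * (z - 1)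
      = (θ + z) * (σ^2/2 * z^2 + μ * z - lam - q) + lam * θ := by
  have heqOn : EqOn (fun z : ℝ => σ^2/2 * (z - β₁) * (z - β₂) * (z - 1))
      (fun z => (θ + z) * (σ^2/2 * z^2 + μ * z - lam - q) + lam * θ) {-θ}ᶜ := by
    intro z (hz : z ≠ -θ)
    have hθz : θ + z ≠ 0 := fun h => hz (by linarith)
    simp only [hcubic z hz, hψ z hz]
    field_simp
    ring
  exact congrFun (Continuous.ext_on (dense_compl_singleton (-θ)) (by fun_prop) (by fun_prop)
    heqOn) z

theorem combination_eq_of_cubic_roots {σ θ q β₁ β₂ β₃ C₁ C₂ C₃ : ℝ} (hσ : σ ≠ 0) (hθ : 0 < θ)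
    (hq : 0 < q) (h12 : β₁ < β₂) (h23 : β₂ < β₃) (h3 : β₃ = 1)
    (hprod : σ^2/2 * (β₁ * β₂) = θ * q) (h₁ : θ + β₁ ≠ 0) (h₂ : θ + β₂ ≠ 0)
    (hC₁ : C₁ = 2 * (θ + β₁) / (σ^2 * ((β₂ - β₁) * (β₃ - β₁))))
    (hC₂ : C₂ = 2 * (θ + β₂) / (σ^2 * ((β₁ - β₂) * (β₃ - β₂))))
    (hC₃ : C₃ = 2 * (θ + β₃) / (σ^2 * ((β₁ - β₃) * (β₂ - β₃)))) (e₀ e₁ e₂ e₃ : ℝ) :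
    q * (C₁ / β₁ * e₁ + C₂ / β₂ * e₂ + C₃ / β₃ * e₃)
      - q * (θ + 1) * (C₁ * ((e₁ - e₀) / (θ + β₁)) + C₂ * ((e₂ - e₀) / (θ + β₂))
        + C₃ * ((e₃ - e₀) / (θ + β₃)))
      = (β₂ * e₁ - β₁ * e₂) / (β₂ - β₁) := by
  subst h3 hC₁ hC₂ hC₃
  have hθq : θ * q ≠ 0 := by positivity
  have hβ₁ : β₁ ≠ 0 := by rintro rfl; exact hθq (by linear_combination -hprod)
  have hβ₂ : β₂ ≠ 0 := by rintro rfl; exact hθq (by linear_combination -hprod)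
  have h12' : β₁ - β₂ ≠ 0 := sub_ne_zero.mpr h12.ne
  have h21 : β₂ - β₁ ≠ 0 := sub_ne_zero.mpr h12.ne'
  have h31 : β₁ - 1 ≠ 0 := sub_ne_zero.mpr (h12.trans h23).ne
  have h32 : β₂ - 1 ≠ 0 := sub_ne_zero.mpr h23.ne
  have h13 : 1 - β₁ ≠ 0 := sub_ne_zero.mpr (h12.trans h23).ne'
  have h23' : 1 - β₂ ≠ 0 := sub_ne_zero.mpr h23.ne'
  have hθ1 : θ + 1 ≠ 0 := by positivity
  rw [show q = σ^2/2 * (β₁ * β₂) / θ by rw [eq_div_iff hθ.ne']; linear_combination -hprod]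
  field_simp
  ring

theorem add_roots_ne_zero {σ lam θ μ q β₁ β₂ : ℝ} (hlamθ : lam * θ ≠ 0)
    (hcub : ∀ z : ℝ, σ^2/2 * (z - β₁) * (z - β₂) * (z - 1)
      = (θ + z) * (σ^2/2 * z^2 + μ * z - lam - q) + lam * θ) :
    θ + β₁ ≠ 0 ∧ θ + β₂ ≠ 0 := by
  have h := hcub (-θ)
  constructor <;> intro hβ <;> apply hlamθ
  · linear_combination -h - σ^2/2 * (-θ - β₂) * (-θ - 1) * hβ
  · linear_combination -h - σ^2/2 * (-θ - β₁) * (-θ - 1) * hβ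

theorem stmt_17_general
    (σ lam θ μ q : ℝ) (hσ : 0 < σ) (hlam : 0 < lam) (hθ : 0 < θ) (hq : 0 < q)
    (ψ : ℝ → ℝ)
    (hψ : ∀ z : ℝ, z ≠ -θ → ψ z = σ^2/2 * z^2 + μ * z + lam * (θ/(θ+z) - 1))
    (β₁ β₂ β₃ : ℝ) (h12 : β₁ < β₂) (h23 : β₂ < β₃) (h3 : β₃ = 1)
    (hcubic : ∀ z : ℝ, z ≠ -θ →
      σ^2/2 * (z - β₁) * (z - β₂) * (z - 1) = (θ + z) * (ψ z - q))
    (C₁ C₂ C₃ : ℝ)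
    (hC₁ : C₁ = 2 * (θ + β₁) / (σ^2 * ((β₂ - β₁) * (β₃ - β₁))))
    (hC₂ : C₂ = 2 * (θ + β₂) / (σ^2 * ((β₁ - β₂) * (β₃ - β₂))))
    (hC₃ : C₃ = 2 * (θ + β₃) / (σ^2 * ((β₁ - β₃) * (β₂ - β₃))))
    (δ : ℝ)
    (w : ℝ → ℝ)
    (W : ℝ → ℝ)
    (hW : ∀ s : ℝ, W s = if 0 ≤ s then
        C₁ * Real.exp (β₁ * s) + C₂ * Real.exp (β₂ * s) + C₃ * Real.exp (β₃ * s)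
      else 0)
    (Z : ℝ → ℝ)
    (hZ : ∀ s : ℝ, Z s = if 0 ≤ s then
        q * (C₁ / β₁ * Real.exp (β₁ * s) + C₂ / β₂ * Real.exp (β₂ * s)
          + C₃ / β₃ * Real.exp (β₃ * s))
      else 1)
    (ystar : ℝ)
    (hyeq : (∫ t in Set.Iio (0:ℝ), ∫ u in Set.Iio t,
        (w (t + ystar) - δ) * Real.exp (-(t - u)) * (lam * θ * Real.exp (θ * u)))
      = δ * q) :
    ∀ x : ℝ, ystar < x →
      δ * Z (x - ystar)
        - (∫ t in Set.Iio (0:ℝ), ∫ u in Set.Iio t,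
            (w (t + ystar) - δ) * W (x - ystar - t + u) * (lam * θ * Real.exp (θ * u)))
      = (δ / (β₂ - β₁)) *
          (β₂ * Real.exp (β₁ * (x - ystar)) - β₁ * Real.exp (β₂ * (x - ystar))) := by
  intro x hx
  have hs : 0 ≤ x - ystar := by linarith
  have hcub := cubic_eq_of_forall_ne hψ hcubic
  have hprod : σ^2/2 * (β₁ * β₂) = θ * q := by linear_combination -hcub 0
  obtain ⟨h₁, h₂⟩ := add_roots_ne_zero (by positivity) hcub
  have hG := integral_Iio_integral_Iio_factor (a := fun t => w (t + ystar) - δ)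
    (integral_Iio_exp_sub_mul_exp hθ (lam * θ)) 0
  rw [hyeq, eq_comm, div_mul_eq_mul_div, div_eq_iff (by positivity)] at hG
  have hWconv : ∫ v in 0..x - ystar, W v * exp (-(θ * (x - ystar - v)))
      = ∫ v in 0..x - ystar, (C₁ * exp (β₁ * v) + C₂ * exp (β₂ * v) + C₃ * exp (β₃ * v))
          * exp (-(θ * (x - ystar - v))) := by
    refine intervalIntegral.integral_congr fun v hv => ?_
    rw [uIcc_of_le hs] at hv
    simp only [hW, if_pos hv.1]
  rw [integral_Iio_integral_Iio_factor (a := fun t => w (t + ystar) - δ)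
      (integral_Iio_shift_mul_exp (fun v hv => by rw [hW, if_neg hv.not_ge]) hs (lam * θ) θ),
    hWconv, integral_exp_sum_mul_exp_sub h₁ h₂ (by rw [h3]; positivity), hZ, if_pos hs,
    mul_right_comm (lam * θ), hG]
  linear_combination δ * combination_eq_of_cubic_roots hσ.ne' hθ hq h12 h23 h3 hprod h₁ h₂
    hC₁ hC₂ hC₃ (exp (-(θ * (x - ystar)))) (exp (β₁ * (x - ystar))) (exp (β₂ * (x - ystar)))
    (exp (β₃ * (x - ystar)))

/-- The explicit formula for the value function `V` of the McKean stochastic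
game on `(y*, ∞)` in the jump-diffusion case: if `y* > log K` satisfies the
integral equation, then for `x > y*`,
`δZ^{(q)}(x−y*) − ∫∫ (w_δ(t+y*) − δ)W^{(q)}(x−y*−t+u)λθe^{θu} du dt
  = (δ/(β₂−β₁))(β₂e^{β₁(x−y*)} − β₁e^{β₂(x−y*)})`. -/
theorem stmt_17
    (σ lam θ μ q : ℝ) (hσ : 0 < σ) (hlam : 0 < lam) (hθ : 0 < θ) (hq : 0 < q)
    (hμ : μ = q - σ^2/2 + lam/(θ+1))
    (ψ : ℝ → ℝ)
    (hψ : ∀ z : ℝ, z ≠ -θ → ψ z = σ^2/2 * z^2 + μ * z + lam * (θ/(θ+z) - 1))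
    (β₁ β₂ β₃ : ℝ) (h12 : β₁ < β₂) (h23 : β₂ < β₃) (h3 : β₃ = 1)
    (hcubic : ∀ z : ℝ, z ≠ -θ →
      σ^2/2 * (z - β₁) * (z - β₂) * (z - 1) = (θ + z) * (ψ z - q))
    (C₁ C₂ C₃ : ℝ)
    (hC₁ : C₁ = 2 * (θ + β₁) / (σ^2 * ((β₂ - β₁) * (β₃ - β₁))))
    (hC₂ : C₂ = 2 * (θ + β₂) / (σ^2 * ((β₁ - β₂) * (β₃ - β₂))))
    (hC₃ : C₃ = 2 * (θ + β₃) / (σ^2 * ((β₁ - β₃) * (β₂ - β₃))))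
    (K : ℝ) (hK : 0 < K) (xstar : ℝ) (hxstar : xstar < Real.log K)
    (δ : ℝ) (hδ : 0 < δ)
    (w : ℝ → ℝ)
    (hw1 : ∀ x : ℝ, x ≤ xstar → w x = K - Real.exp x)
    (hw2 : ∀ x : ℝ, xstar < x → x < Real.log K →
      w x = K * q * (C₁ / β₁ * Real.exp (β₁ * (x - xstar))
          + C₂ / β₂ * Real.exp (β₂ * (x - xstar))
          + C₃ / β₃ * Real.exp (β₃ * (x - xstar))) - Real.exp x)
    (hw3 : ∀ x : ℝ, Real.log K ≤ x → w x = δ)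
    (W : ℝ → ℝ)
    (hW : ∀ s : ℝ, W s = if 0 ≤ s then
        C₁ * Real.exp (β₁ * s) + C₂ * Real.exp (β₂ * s) + C₃ * Real.exp (β₃ * s)
      else 0)
    (Z : ℝ → ℝ)
    (hZ : ∀ s : ℝ, Z s = if 0 ≤ s then
        q * (C₁ / β₁ * Real.exp (β₁ * s) + C₂ / β₂ * Real.exp (β₂ * s)
          + C₃ / β₃ * Real.exp (β₃ * s))
      else 1)
    (ystar : ℝ) (hystar : Real.log K < ystar)
    (hyeq : (∫ t in Set.Iio (0:ℝ), ∫ u in Set.Iio t,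
        (w (t + ystar) - δ) * Real.exp (-(t - u)) * (lam * θ * Real.exp (θ * u)))
      = δ * q) :
    ∀ x : ℝ, ystar < x →
      δ * Z (x - ystar)
        - (∫ t in Set.Iio (0:ℝ), ∫ u in Set.Iio t,
            (w (t + ystar) - δ) * W (x - ystar - t + u) * (lam * θ * Real.exp (θ * u)))
      = (δ / (β₂ - β₁)) *
          (β₂ * Real.exp (β₁ * (x - ystar)) - β₁ * Real.exp (β₂ * (x - ystar))) :=
  stmt_17_general σ lam θ μ q hσ hlam hθ hq ψ hψ β₁ β₂ β₃ h12 h23 h3 hcubic C₁ C₂ C₃ hC₁ hC₂ hC₃ δ w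
    W hW Z hZ ystar hyeq
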